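/- If W̃ is degraded with respect to W, then the minus-transform preserves degradation: W̃^- is degraded with respect to W^-. -/

import Mathlib

open Finset

/-- A discrete channel: nonnegative transition "probabilities" summing to one. -/
def IsChannel {X Y : Type} [Fintype Y] (W : X → Y → ℝ) : Prop :=
  (∀ x y, 0 ≤ W x y) ∧ ∀ x, ∑ y, W x y = 1

/-- `Wd` is (stochastically) degraded with respect to `W`. -/
def Degraded {X Y Z : Type} [Fintype Y] [Fintype Z]
    (Wd : X → Z → ℝ) (W : X → Y → ℝ) : Prop :=
  ∃ P : Y → Z → ℝ, IsChannel P ∧ ∀ x z, Wd x z = ∑ y, P y z * W x y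
/-- Arıkan's minus transform. -/
noncomputable def Wminus {Y : Type} (W : Fin 2 → Y → ℝ) : Fin 2 → Y × Y → ℝ :=
  fun u1 p => ∑ u2 : Fin 2, (1 / 2 : ℝ) * W (u1 + u2) p.1 * W u2 p.2

/-- Arıkan's plus transform. -/
noncomputable def Wplus {Y : Type} (W : Fin 2 → Y → ℝ) : Fin 2 → Y × Y × Fin 2 → ℝ :=
  fun u2 p => (1 / 2 : ℝ) * W (p.2.2 + u2) p.1 * W u2 p.2.1

/-!
`W⁻` is the uniform mixture, over `u₂`, of the product channel `W ⊗ W` fed with `(u₁ + u₂, u₂)`.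
Degradation passes to product channels (degrade each output with `P ⊗ P`) and to mixtures
of relabelled inputs (keep the same `P`), hence to the minus transform.
-/

theorem IsChannel.prod {X X' Y Y' : Type} [Fintype Y] [Fintype Y']
    {P : X → Y → ℝ} {Q : X' → Y' → ℝ} (hP : IsChannel P) (hQ : IsChannel Q) :
    IsChannel (fun (x : X × X') (y : Y × Y') => P x.1 y.1 * Q x.2 y.2) := by
  refine ⟨fun x y => mul_nonneg (hP.1 _ _) (hQ.1 _ _), fun x => ?_⟩
  rw [Fintype.sum_prod_type, ← Finset.sum_mul_sum, hP.2, hQ.2, one_mul]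

theorem Degraded.prod {X X' Y Y' Z Z' : Type} [Fintype Y] [Fintype Y'] [Fintype Z] [Fintype Z']
    {Wd : X → Z → ℝ} {W : X → Y → ℝ} {Vd : X' → Z' → ℝ} {V : X' → Y' → ℝ}
    (hW : Degraded Wd W) (hV : Degraded Vd V) :
    Degraded (fun (x : X × X') (z : Z × Z') => Wd x.1 z.1 * Vd x.2 z.2)
      (fun (x : X × X') (y : Y × Y') => W x.1 y.1 * V x.2 y.2) := by
  obtain ⟨P, hP, hPW⟩ := hW
  obtain ⟨Q, hQ, hQV⟩ := hV
  refine ⟨fun y z => P y.1 z.1 * Q y.2 z.2, hP.prod hQ, fun x z => ?_⟩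
  simp only [hPW, hQV, Finset.sum_mul_sum, Fintype.sum_prod_type]
  exact Finset.sum_congr rfl fun a _ => Finset.sum_congr rfl fun b _ => by ring

theorem Degraded.mixture {X U Y Z ι : Type} [Fintype Y] [Fintype Z] [Fintype ι]
    {Wd : X → Z → ℝ} {W : X → Y → ℝ} (h : Degraded Wd W) (c : U → ι → ℝ) (f : U → ι → X) :
    Degraded (fun u z => ∑ i, c u i * Wd (f u i) z) (fun u y => ∑ i, c u i * W (f u i) y) := by
  obtain ⟨P, hP, hPW⟩ := h
  refine ⟨P, hP, fun u z => ?_⟩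
  simp only [hPW, Finset.mul_sum]
  rw [Finset.sum_comm]
  exact Finset.sum_congr rfl fun y _ => Finset.sum_congr rfl fun i _ => by ring

theorem minus_preserves_degradation_general {Y Z : Type} [Fintype Y] [Fintype Z]
    (W : Fin 2 → Y → ℝ) (Wd : Fin 2 → Z → ℝ)
    (hdeg : Degraded Wd W) :
    Degraded (Wminus Wd) (Wminus W) := by
  have h := (hdeg.prod hdeg).mixture (fun _ _ => (1 / 2 : ℝ)) (fun u1 u2 => (u1 + u2, u2))
  simp only [← mul_assoc] at h
  exact h

/-- The minus-transform preserves degradation. -/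
theorem minus_preserves_degradation {Y Z : Type} [Fintype Y] [Fintype Z]
    (W : Fin 2 → Y → ℝ) (Wd : Fin 2 → Z → ℝ)
    (hW : IsChannel W) (hWd : IsChannel Wd) (hdeg : Degraded Wd W) :
    Degraded (Wminus Wd) (Wminus W) :=
  minus_preserves_degradation_general W Wd hdeg
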